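/- Let M be a type carrying the discrete topology, Γ a set of finite subsets of M, k : ℕ, and f : Fin k → (ℕ → Bool) → M a family of continuous functions with f i ≠ f j for some i, j. Then exactly one of the following holds: (∃ w, the image set {f i w | i : Fin k} has at least two elements and belongs to Γ, and for all v < w the image {f i v | i : Fin k} is a singleton), or (∃ w, the image set {f i w | i : Fin k} has at least two elements and does not belong to Γ, and for all v < w the image {f i v | i : Fin k} is a singleton). (Self-duality of the flag modality on hypercoherences: (flag X)⊥ = flag (X⊥).) -/
import Mathlib


/-- Lexicographic (strict) order on the Cantor space `ℕ → Bool`. -/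
def lexLt (w w' : ℕ → Bool) : Prop :=
  ∃ n : ℕ, (∀ k < n, w k = w' k) ∧ w n = false ∧ w' n = true


open Classical in
/-- Lex-least candidate element of `S`. -/
noncomputable def minW (S : Set (ℕ → Bool)) : ℕ → Bool
  | n => if ∃ v ∈ S, (∀ m, m < n → v m = minW S m) ∧ v n = false then false else true

open Classical in
lemma minW_def (S : Set (ℕ → Bool)) (n : ℕ) :
    minW S n = if ∃ v ∈ S, (∀ m, m < n → v m = minW S m) ∧ v n = false then false else true := by
  rw [minW]

lemma minW_prefix (S : Set (ℕ → Bool)) (hS : S.Nonempty) (n : ℕ) :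
    ∃ v ∈ S, ∀ m, m < n → v m = minW S m := by
  induction n with
  | zero => exact ⟨hS.choose, hS.choose_spec, fun m hm => absurd hm (Nat.not_lt_zero m)⟩
  | succ n ih =>
    obtain ⟨v, hv, hvm⟩ := ih
    by_cases h : ∃ v ∈ S, (∀ m, m < n → v m = minW S m) ∧ v n = false
    · obtain ⟨v', hv', hv'm, hv'n⟩ := h
      refine ⟨v', hv', fun m hm => ?_⟩
      rcases Nat.lt_succ_iff_lt_or_eq.mp hm with h' | h'
      · exact hv'm m h'
      · subst h'; rw [hv'n, minW_def, if_pos ⟨v', hv', hv'm, hv'n⟩]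
    · refine ⟨v, hv, fun m hm => ?_⟩
      rcases Nat.lt_succ_iff_lt_or_eq.mp hm with h' | h'
      · exact hvm m h'
      · subst h'
        have h1 : minW S m = true := by rw [minW_def, if_neg h]
        have h2 : v m ≠ false := fun hc => h ⟨v, hv, hvm, hc⟩
        rw [h1]; simpa using h2

lemma minW_minimal (S : Set (ℕ → Bool)) (v : ℕ → Bool) (hv : lexLt v (minW S)) : v ∉ S := by
  obtain ⟨n, hpre, hvn, hmn⟩ := hv
  intro hvS
  have : ¬ ∃ v ∈ S, (∀ m, m < n → v m = minW S m) ∧ v n = false := by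
    intro h
    rw [minW_def, if_pos h] at hmn
    exact Bool.false_ne_true hmn
  exact this ⟨v, hvS, hpre, hvn⟩

lemma lex_trichotomy (w w' : ℕ → Bool) (h : w ≠ w') : lexLt w w' ∨ lexLt w' w := by
  have hex : ∃ n, w n ≠ w' n := by
    by_contra hc
    push_neg at hc
    exact h (funext hc)
  classical
  let n := Nat.find hex
  have hn : w n ≠ w' n := Nat.find_spec hex
  have hpre : ∀ m, m < n → w m = w' m := fun m hm => by
    by_contra hc
    exact absurd hm (not_lt.mpr (Nat.find_le hc))
  cases hw : w n <;> cases hw' : w' n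
  · exact absurd (hw.trans hw'.symm) hn
  · exact Or.inl ⟨n, hpre, hw, hw'⟩
  · exact Or.inr ⟨n, fun m hm => (hpre m hm).symm, hw', hw⟩
  · exact absurd (hw.trans hw'.symm) hn

/-- Local constancy of a continuous map to a discrete space, at a point of Cantor space. -/
lemma modulus {M : Type*} [TopologicalSpace M] [DiscreteTopology M]
    (g : (ℕ → Bool) → M) (hg : Continuous g) (w : ℕ → Bool) :
    ∃ N, ∀ v : ℕ → Bool, (∀ m, m < N → v m = w m) → g v = g w := by
  have hU : IsOpen (g ⁻¹' {g w}) := (isOpen_discrete _).preimage hg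
  obtain ⟨I, u, h1, h2⟩ := isOpen_pi_iff.mp hU w rfl
  refine ⟨I.sup id + 1, fun v hv => ?_⟩
  have : v ∈ (I : Set ℕ).pi u := by
    intro m hm
    have hmN : m < I.sup id + 1 := Nat.lt_succ_of_le (Finset.le_sup (f := id) hm)
    rw [hv m hmN]
    exact (h1 m hm).2
  exact h2 this

/-- Self-duality of the flag modality on hypercoherences: `(flag X)⊥ = flag (X⊥)`. -/
theorem flag_hypercoherence_self_dual {M : Type*} [TopologicalSpace M]
    [DiscreteTopology M] [DecidableEq M]
    (Γ : Set (Finset M)) (k : ℕ) (f : Fin k → (ℕ → Bool) → M)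
    (hf : ∀ i, Continuous (f i)) (hne : ∃ i j, f i ≠ f j) :
    Xor'
      (∃ w, (1 < (Finset.univ.image (fun i => f i w)).card ∧
              Finset.univ.image (fun i => f i w) ∈ Γ) ∧
        ∀ v, lexLt v w → ∃ a, Finset.univ.image (fun i => f i v) = {a})
      (∃ w, (1 < (Finset.univ.image (fun i => f i w)).card ∧
              Finset.univ.image (fun i => f i w) ∉ Γ) ∧
        ∀ v, lexLt v w → ∃ a, Finset.univ.image (fun i => f i v) = {a}) := by
  classical
  obtain ⟨i₀, j₀, hij₀⟩ := hne
  set S : Set (ℕ → Bool) := {w | ∃ i j, f i w ≠ f j w} with hSdef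
  have hSne : S.Nonempty := by
    obtain ⟨w, hw⟩ := Function.ne_iff.mp hij₀
    exact ⟨w, i₀, j₀, hw⟩
  set g : ℕ → Bool := minW S with hgdef
  -- g ∈ S
  have hgS : g ∈ S := by
    choose N hN using fun i => modulus (f i) (hf i) g
    set N0 := Finset.univ.sup N with hN0
    obtain ⟨v, hvS, hvpre⟩ := minW_prefix S hSne N0
    obtain ⟨i, j, hij⟩ := hvS
    have heq : ∀ i : Fin k, f i v = f i g := by
      intro i
      exact hN i v (fun m hm => hvpre m (lt_of_lt_of_le hm (Finset.le_sup (Finset.mem_univ i))))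
    exact ⟨i, j, by rw [← heq i, ← heq j]; exact hij⟩
  -- cardinality facts
  have hcard : ∀ w : ℕ → Bool, w ∈ S → 1 < (Finset.univ.image (fun i => f i w)).card := by
    rintro w ⟨i, j, hij⟩
    exact Finset.one_lt_card.mpr ⟨f i w, Finset.mem_image_of_mem _ (Finset.mem_univ i),
      f j w, Finset.mem_image_of_mem _ (Finset.mem_univ j), hij⟩
  have hsing : ∀ w : ℕ → Bool, w ∉ S → ∃ a, Finset.univ.image (fun i => f i w) = {a} := by
    intro w hw
    simp only [hSdef, Set.mem_setOf_eq, not_exists, not_not] at hw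
    refine ⟨f i₀ w, Finset.eq_singleton_iff_unique_mem.mpr
      ⟨Finset.mem_image_of_mem _ (Finset.mem_univ i₀), ?_⟩⟩
    intro x hx
    obtain ⟨i, _, rfl⟩ := Finset.mem_image.mp hx
    exact hw i i₀
  have hScard : ∀ w : ℕ → Bool, 1 < (Finset.univ.image (fun i => f i w)).card → w ∈ S := by
    intro w hw
    obtain ⟨a, ha, b, hb, hab⟩ := Finset.one_lt_card.mp hw
    obtain ⟨i, _, rfl⟩ := Finset.mem_image.mp ha
    obtain ⟨j, _, rfl⟩ := Finset.mem_image.mp hb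
    exact ⟨i, j, hab⟩
  have hmin : ∀ v, lexLt v g → ∃ a, Finset.univ.image (fun i => f i v) = {a} :=
    fun v hv => hsing v (minW_minimal S v hv)
  -- uniqueness of the witness
  have huniq : ∀ w', 1 < (Finset.univ.image (fun i => f i w')).card →
      (∀ v, lexLt v w' → ∃ a, Finset.univ.image (fun i => f i v) = {a}) → w' = g := by
    intro w' hc' hmin'
    by_contra hne'
    rcases lex_trichotomy w' g hne' with h | h
    · exact absurd (hScard w' hc') (minW_minimal S w' h)
    · obtain ⟨a, ha⟩ := hmin' g h
      have := hcard g hgS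
      rw [ha, Finset.card_singleton] at this
      exact lt_irrefl 1 this
  by_cases hΓ : Finset.univ.image (fun i => f i g) ∈ Γ
  · refine Or.inl ⟨⟨g, ⟨hcard g hgS, hΓ⟩, hmin⟩, ?_⟩
    rintro ⟨w', ⟨hc', hΓ'⟩, hmin'⟩
    rw [huniq w' hc' hmin'] at hΓ'
    exact hΓ' hΓ
  · refine Or.inr ⟨⟨g, ⟨hcard g hgS, hΓ⟩, hmin⟩, ?_⟩
    rintro ⟨w', ⟨hc', hΓ'⟩, hmin'⟩
    rw [huniq w' hc' hmin'] at hΓ'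
    exact hΓ hΓ'
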